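/- Let M = L × L^‡ with the bilinear form F((f₊,f₋),(g₊,g₋)) = B(f₊,g₊) − B^‡(f₋,g₋), D = {(f, f^‡) | f ∈ L} the diagonal, and W° the standard complementary Lagrangian subalgebra. Let W ⊂ M be a Lagrangian Lie subalgebra with M = D ⊕ W and W commensurable with W°, and let W_± ⊆ L_± denote the images of W under the two projections. Then W_±^⊥ ⊆ W_±, W_+^⊥ × {0} ⊆ W, and {0} × W_−^⊥ ⊆ W; moreover there exists n ∈ ℕ with (L_±)_{≥n} ⊆ W_± ⊆ (L_±)_{≥−n}, i.e., W_± are bounded coisotropic Lie subalgebras of L_±. -/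

import Mathlib

open TensorProduct LaurentPolynomial

noncomputable section

/-- The `ε^k`-eigenspace of the automorphism `σ`. -/
def eigSp {g : Type*} [LieRing g] [LieAlgebra ℂ g]
    (σ : g ≃ₗ⁅ℂ⁆ g) (ε : ℂ) (k : ℤ) : Submodule ℂ g :=
  LinearMap.ker (σ.toLinearEquiv.toLinearMap - ε ^ k • LinearMap.id)

variable (g : Type*) [LieRing g] [LieAlgebra ℂ g]

/-- The full loop algebra `g[z, z⁻¹] = ℂ[z,z⁻¹] ⊗ g`. -/
abbrev LoopAlg := LaurentPolynomial ℂ ⊗[ℂ] g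

/-- The residue pairing on `ℂ[z,z⁻¹]`: `(p, q) ↦` coefficient of `z⁰` in `p·q`. -/
def resPair : LinearMap.BilinForm ℂ (LaurentPolynomial ℂ) :=
  LinearMap.mk₂ ℂ (fun p q => AddMonoidAlgebra.coeff (p * q) 0)
    (fun p p' q => by beta_reduce; rw [add_mul]; exact Finsupp.add_apply _ _ 0)
    (fun c p q => by beta_reduce; rw [smul_mul_assoc]; exact Finsupp.smul_apply c _ 0)
    (fun p q q' => by beta_reduce; rw [mul_add]; exact Finsupp.add_apply _ _ 0)
    (fun c p q => by beta_reduce; rw [mul_smul_comm]; exact Finsupp.smul_apply c _ 0)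

/-- The standard bilinear form `B(a z^k, b z^l) = κ(a,b) δ_{k+l,0}` on the loop algebra. -/
def loopForm : LinearMap.BilinForm ℂ (LoopAlg g) :=
  LinearMap.BilinForm.tmul (resPair) (killingForm ℂ g)

/-- The dagger map `a z^k ↦ a z^{−k}`, an isometric Lie algebra isomorphism
`L(g,σ) → L(g,σ⁻¹)`. -/
def daggerMap : LoopAlg g →ₗ[ℂ] LoopAlg g :=
  TensorProduct.map (LaurentPolynomial.invert (R := ℂ)).toLinearMap LinearMap.id

/-- The bilinear form `F((f₊,f₋),(g₊,g₋)) = B(f₊,g₊) − B(f₋,g₋)` on `L × L^‡`. -/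
def prodForm : LinearMap.BilinForm ℂ (LoopAlg g × LoopAlg g) :=
  ((loopForm g).compl₁₂ (LinearMap.fst ℂ (LoopAlg g) (LoopAlg g))
      (LinearMap.fst ℂ (LoopAlg g) (LoopAlg g))) -
  ((loopForm g).compl₁₂ (LinearMap.snd ℂ (LoopAlg g) (LoopAlg g))
      (LinearMap.snd ℂ (LoopAlg g) (LoopAlg g)))

variable {g}

/-- The degree `k` component `g_k z^k` of the twisted loop algebra `L(g,σ)`. -/
def loopComp (σ : g ≃ₗ⁅ℂ⁆ g) (ε : ℂ) (k : ℤ) : Submodule ℂ (LoopAlg g) :=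
  Submodule.map (TensorProduct.mk ℂ (LaurentPolynomial ℂ) g (T k)) (eigSp σ ε k)

/-- The degree `k` component `g_k^‡ z^k` of the twisted loop algebra `L(g,σ⁻¹)`. -/
def loopCompDag (σ : g ≃ₗ⁅ℂ⁆ g) (ε : ℂ) (k : ℤ) : Submodule ℂ (LoopAlg g) :=
  Submodule.map (TensorProduct.mk ℂ (LaurentPolynomial ℂ) g (T k)) (eigSp σ ε (-k))

/-- The twisted loop algebra `L(g,σ) = ⊕_{k∈ℤ} g_k z^k`. -/
def loopCarrier (σ : g ≃ₗ⁅ℂ⁆ g) (ε : ℂ) : Submodule ℂ (LoopAlg g) :=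
  ⨆ k : ℤ, loopComp σ ε k

/-- The twisted loop algebra `L^‡ = L(g,σ⁻¹) = ⊕_{k∈ℤ} g_k^‡ z^k`. -/
def loopDagCarrier (σ : g ≃ₗ⁅ℂ⁆ g) (ε : ℂ) : Submodule ℂ (LoopAlg g) :=
  ⨆ k : ℤ, loopCompDag σ ε k

/-- `L_{≥ n} = t^n·L_{≥0}` inside `L(g,σ)`. -/
def loopGe (σ : g ≃ₗ⁅ℂ⁆ g) (ε : ℂ) (m : ℕ) (n : ℤ) : Submodule ℂ (LoopAlg g) :=
  ⨆ j : ℤ, ⨆ _ : n * (m : ℤ) ≤ j, loopComp σ ε j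

/-- `L^‡_{≥ n}` inside `L(g,σ⁻¹)`. -/
def loopGeDag (σ : g ≃ₗ⁅ℂ⁆ g) (ε : ℂ) (m : ℕ) (n : ℤ) : Submodule ℂ (LoopAlg g) :=
  ⨆ j : ℤ, ⨆ _ : n * (m : ℤ) ≤ j, loopCompDag σ ε j

/-- The diagonal `D = {(f, f^‡) | f ∈ L}` in `L × L^‡`. -/
def loopDiag (σ : g ≃ₗ⁅ℂ⁆ g) (ε : ℂ) : Submodule ℂ (LoopAlg g × LoopAlg g) :=
  Submodule.map (LinearMap.prod LinearMap.id (daggerMap g)) (loopCarrier σ ε)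

/-- The standard complementary Lagrangian subalgebra `W°`, attached to a triangular
decomposition `g₀ = g₀⁺ ⊕ h ⊕ g₀⁻`:
`W° = {(f₊,f₋) ∈ B₊ × B₋ | π₊(f₊) + π₋(f₋) = 0}`. -/
def stdW (σ : g ≃ₗ⁅ℂ⁆ g) (ε : ℂ) (gp hC gm : Submodule ℂ g) :
    Submodule ℂ (LoopAlg g × LoopAlg g) :=
  ((Submodule.map (TensorProduct.mk ℂ (LaurentPolynomial ℂ) g (T 0)) gp ⊔
      (⨆ j : ℤ, ⨆ _ : 1 ≤ j, loopComp σ ε j)).prod ⊥) ⊔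
  (Submodule.prod ⊥ (Submodule.map (TensorProduct.mk ℂ (LaurentPolynomial ℂ) g (T 0)) gm ⊔
      (⨆ j : ℤ, ⨆ _ : 1 ≤ j, loopCompDag σ ε j))) ⊔
  Submodule.map
    (LinearMap.prod (TensorProduct.mk ℂ (LaurentPolynomial ℂ) g (T 0))
      (-(TensorProduct.mk ℂ (LaurentPolynomial ℂ) g (T 0)))) hC

/-- Commensurability of two subspaces: `(W' + W'')/(W' ∩ W'')` is finite dimensional. -/
def Commens {k V : Type*} [Field k] [AddCommGroup V] [Module k V]
    (W' W'' : Submodule k V) : Prop :=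
  FiniteDimensional k (↥(W' ⊔ W'') ⧸ Submodule.comap (W' ⊔ W'').subtype (W' ⊓ W''))

end

/-! Coisotropy of `W_±` comes from `W^⊥ ⊆ W`: if `f ⊥ W_+` then `(f, 0)` is orthogonal to all
of `W`, so it lies in `W`. For boundedness, commensurability gives `W ⊆ W° + S` with `S`
finite dimensional; `W°` lives in degrees `≥ 0` and `S` in degrees `≥ -N`, so
`W_± ⊆ (L_±)_{≥ -N}`. As `B` pairs degree `j` only with degree `-j`, everything of degree
`> N` is orthogonal to `W_±`, hence lies in `W_±^⊥ ⊆ W_±`. -/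

namespace Commens

variable {k V : Type*} [Field k] [AddCommGroup V] [Module k V] {W W' : Submodule k V}

lemma exists_fg_le_sup (h : Commens W W') :
    ∃ S : Submodule k V, S.FG ∧ S ≤ W ⊔ W' ∧ W ≤ W' ⊔ S := by
  obtain ⟨C, hC⟩ := Submodule.exists_isCompl (Submodule.comap (W ⊔ W').subtype (W ⊓ W'))
  have : Module.Finite k C := by
    unfold Commens at h
    exact Module.Finite.equiv (Submodule.quotientEquivOfIsCompl _ _ hC)
  have hsup : W ⊔ W' = (W ⊓ W') ⊔ C.map (W ⊔ W').subtype := by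
    conv_lhs => rw [← Submodule.map_subtype_top (W ⊔ W'), ← hC.sup_eq_top, Submodule.map_sup,
      Submodule.map_comap_subtype, inf_eq_right.mpr (inf_le_left.trans le_sup_left)]
  refine ⟨C.map (W ⊔ W').subtype, (Module.Finite.iff_fg.mp this).map _,
    Submodule.map_subtype_le _ _, ?_⟩
  calc W ≤ W ⊔ W' := le_sup_left
    _ = (W ⊓ W') ⊔ C.map (W ⊔ W').subtype := hsup
    _ ≤ W' ⊔ C.map (W ⊔ W').subtype := sup_le_sup_right inf_le_right _

end Commens

section Graded

open Submodule

variable {g : Type*} [LieRing g] [LieAlgebra ℂ g] (A A' : ℤ → Submodule ℂ g)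

/-- `⨁_{j ≥ c} z^j ⊗ A j`; for `A = eigSp σ ε` this is `L_{≥ c}` with `c` counted in
degrees rather than in multiples of `m`. -/
noncomputable def gradedGe (c : ℤ) : Submodule ℂ (LoopAlg g) :=
  ⨆ j : ℤ, ⨆ _ : c ≤ j, (A j).map (TensorProduct.mk ℂ (LaurentPolynomial ℂ) g (T j))

noncomputable def gradedSup : Submodule ℂ (LoopAlg g) :=
  ⨆ j : ℤ, (A j).map (TensorProduct.mk ℂ (LaurentPolynomial ℂ) g (T j))

lemma gradedGe_antitone : Antitone (gradedGe A) := fun _ _ h =>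
  iSup_mono fun _ => iSup_le fun hj => le_iSup_of_le (h.trans hj) le_rfl

lemma gradedGe_le_gradedSup (c : ℤ) : gradedGe A c ≤ gradedSup A :=
  iSup_mono fun _ => iSup_le fun _ => le_rfl

lemma map_le_gradedGe {c j : ℤ} (hj : c ≤ j) {B : Submodule ℂ g} (hB : B ≤ A j) :
    B.map (TensorProduct.mk ℂ (LaurentPolynomial ℂ) g (T j)) ≤ gradedGe A c :=
  (map_mono hB).trans (le_iSup₂_of_le j hj le_rfl)

lemma gradedSup_eq_iSup_gradedGe : gradedSup A = ⨆ N : ℕ, gradedGe A (-N) :=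
  le_antisymm (iSup_le fun j => le_iSup_of_le j.natAbs (map_le_gradedGe A (by omega) le_rfl))
    (iSup_le fun _ => gradedGe_le_gradedSup A _)

lemma exists_le_gradedGe_of_fg {S : Submodule ℂ (LoopAlg g)} (hS : S.FG)
    (hSA : S ≤ gradedSup A) : ∃ N : ℕ, S ≤ gradedGe A (-N) := by
  have hmono : Monotone fun N : ℕ => gradedGe A (-N) :=
    fun _ _ h => gradedGe_antitone A (by omega)
  obtain ⟨_, ⟨N, rfl⟩, hN⟩ := (fg_iff_compact S).mp hS _ _ (Set.range_nonempty _)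
    (directedOn_range.mpr hmono.directed_le) isLUB_iSup
    (hSA.trans (gradedSup_eq_iSup_gradedGe A).le)
  exact ⟨N, hN⟩

lemma exists_map_le_gradedGe {M : Type*} [AddCommGroup M] [Module ℂ M]
    (f : M →ₗ[ℂ] LoopAlg g) {W W₀ S : Submodule ℂ M} (hW : W ≤ W₀ ⊔ S)
    (hW₀ : W₀.map f ≤ gradedGe A 0) (hS : S.FG) (hSA : S.map f ≤ gradedSup A) :
    ∃ N : ℕ, W.map f ≤ gradedGe A (-N) := by
  obtain ⟨N, hN⟩ := exists_le_gradedGe_of_fg A (hS.map f) hSA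
  refine ⟨N, (map_mono hW).trans ?_⟩
  rw [Submodule.map_sup]
  exact sup_le (hW₀.trans (gradedGe_antitone A (by omega))) hN

lemma resPair_T_T {j k : ℤ} (h : j + k ≠ 0) : resPair (T j) (T k : LaurentPolynomial ℂ) = 0 := by
  change (T j * T k : LaurentPolynomial ℂ).coeff 0 = 0
  rw [← T_add, T_apply, if_neg h]

lemma loopForm_tmul (p q : LaurentPolynomial ℂ) (a b : g) :
    loopForm g (p ⊗ₜ a) (q ⊗ₜ b) = killingForm ℂ g a b * resPair p q := by
  simp [loopForm, smul_eq_mul]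

lemma loopForm_isSymm : LinearMap.IsSymm (loopForm g) := by
  have hres : LinearMap.IsSymm (resPair : LinearMap.BilinForm ℂ (LaurentPolynomial ℂ)) :=
    ⟨fun p q => congrArg (fun r : LaurentPolynomial ℂ => r.coeff 0) (mul_comm p q)⟩
  exact hres.tmul (LieModule.traceForm_isSymm ℂ g g)

lemma gradedGe_le_orthogonal_gradedGe {a b : ℤ} (hab : 0 < a + b) :
    gradedGe A' b ≤ (loopForm g).orthogonal (gradedGe A a) := by
  refine iSup₂_le fun k hk => map_le_iff_le_comap.mpr fun v _ => ?_
  suffices gradedGe A a ≤ LinearMap.ker ((loopForm g).flip (T k ⊗ₜ v)) from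
    fun x hx => this hx
  refine iSup₂_le fun j hj => map_le_iff_le_comap.mpr fun u _ => ?_
  simp [loopForm_tmul, resPair_T_T (show j + k ≠ 0 by omega)]

/-- Degrees `> N` are orthogonal to degrees `≥ -N`, hence lie in `U^⊥ ⊆ U`. -/
lemma gradedGe_le_and_le_gradedGe {U : Submodule ℂ (LoopAlg g)} {N n m : ℕ}
    (hU : U ≤ gradedGe A (-N)) (hcoiso : gradedSup A ⊓ (loopForm g).orthogonal U ≤ U)
    (hNn : N < n) (hm : 0 < m) :
    gradedGe A (n * m) ≤ U ∧ U ≤ gradedGe A (-n * m) := by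
  have hnm : (n : ℤ) ≤ n * m := le_mul_of_one_le_right (by positivity) (by exact_mod_cast hm)
  refine ⟨fun x hx => hcoiso ⟨gradedGe_le_gradedSup A _ hx, ?_⟩,
    hU.trans (gradedGe_antitone A (by linarith))⟩
  exact LinearMap.BilinForm.orthogonal_le hU (gradedGe_le_orthogonal_gradedGe A A (by omega) hx)

end Graded

section Coisotropic

variable {g : Type*} [LieRing g] [LieAlgebra ℂ g] {P Q : Submodule ℂ (LoopAlg g)}
  {W : Submodule ℂ (LoopAlg g × LoopAlg g)}

lemma prod_bot_le_of_coisotropic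
    (hW : ∀ x ∈ P.prod Q, (∀ y ∈ W, prodForm g x y = 0) → x ∈ W) :
    (P ⊓ (loopForm g).orthogonal (W.map (LinearMap.fst ℂ _ _))).prod ⊥ ≤ W := by
  rintro ⟨x, _⟩ ⟨⟨hxP, hxW⟩, rfl : _ = (0 : LoopAlg g)⟩
  refine hW _ ⟨hxP, Q.zero_mem⟩ fun y hy => ?_
  have hxy : loopForm g x y.1 = 0 := (loopForm_isSymm.eq _ _).trans (hxW _ ⟨y, hy, rfl⟩)
  simp [prodForm, hxy]

lemma bot_prod_le_of_coisotropic
    (hW : ∀ x ∈ P.prod Q, (∀ y ∈ W, prodForm g x y = 0) → x ∈ W) :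
    Submodule.prod ⊥ (Q ⊓ (loopForm g).orthogonal (W.map (LinearMap.snd ℂ _ _))) ≤ W := by
  rintro ⟨_, x⟩ ⟨rfl : _ = (0 : LoopAlg g), ⟨hxQ, hxW⟩⟩
  refine hW _ ⟨P.zero_mem, hxQ⟩ fun y hy => ?_
  have hxy : loopForm g x y.2 = 0 := (loopForm_isSymm.eq _ _).trans (hxW _ ⟨y, hy, rfl⟩)
  simp [prodForm, hxy]

end Coisotropic

lemma stdW_le_prod_gradedGe {g : Type*} [LieRing g] [LieAlgebra ℂ g] {σ : g ≃ₗ⁅ℂ⁆ g} {ε : ℂ}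
    {gp hC gm : Submodule ℂ g} (hdec : gp ⊔ hC ⊔ gm = eigSp σ ε 0) :
    stdW σ ε gp hC gm ≤
      (gradedGe (eigSp σ ε) 0).prod (gradedGe (fun j => eigSp σ ε (-j)) 0) := by
  have hgp : gp ≤ eigSp σ ε 0 := hdec ▸ le_sup_left.trans le_sup_left
  have hhC : hC ≤ eigSp σ ε 0 := hdec ▸ le_sup_right.trans le_sup_left
  have hhC' : hC ≤ eigSp σ ε (-0) := hhC
  have hgm : gm ≤ eigSp σ ε (-0) := hdec ▸ le_sup_right
  refine sup_le (sup_le (Submodule.prod_mono ?_ bot_le) (Submodule.prod_mono bot_le ?_)) ?_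
  · exact sup_le (map_le_gradedGe _ le_rfl hgp) (gradedGe_antitone _ zero_le_one)
  · exact sup_le (map_le_gradedGe _ le_rfl hgm) (gradedGe_antitone _ zero_le_one)
  · rintro _ ⟨h, hh, rfl⟩
    exact ⟨map_le_gradedGe _ le_rfl hhC ⟨h, hh, rfl⟩,
      neg_mem (map_le_gradedGe (fun j => eigSp σ ε (-j)) le_rfl hhC' ⟨h, hh, rfl⟩)⟩

theorem maninTriple_projections_bounded_coisotropic_general
    {g : Type*} [LieRing g] [LieAlgebra ℂ g]
    (m : ℕ) (hm : 0 < m)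
    (σ : g ≃ₗ⁅ℂ⁆ g)
    (ε : ℂ)
    -- a triangular decomposition g₀ = g₀⁺ ⊕ h ⊕ g₀⁻
    (gp hC gm : Submodule ℂ g)
    (hdec : gp ⊔ hC ⊔ gm = eigSp σ ε 0)
    -- the Manin triple M = D ∔ W
    (W : Submodule ℂ (LoopAlg g × LoopAlg g))
    (hWsub : W ≤ (loopCarrier σ ε).prod (loopDagCarrier σ ε))
    (hWlie : ∀ x ∈ W, ∀ y ∈ W, (⁅Prod.fst x, Prod.fst y⁆, ⁅Prod.snd x, Prod.snd y⁆) ∈ W)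
    (hWcoiso : ∀ x ∈ (loopCarrier σ ε).prod (loopDagCarrier σ ε),
      (∀ y ∈ W, prodForm g x y = 0) → x ∈ W)
    (hcomm : Commens W (stdW σ ε gp hC gm)) :
    (∀ x ∈ Submodule.map (LinearMap.fst ℂ _ _) W, ∀ y ∈ Submodule.map (LinearMap.fst ℂ _ _) W,
        ⁅x, y⁆ ∈ Submodule.map (LinearMap.fst ℂ _ _) W) ∧
    (∀ x ∈ Submodule.map (LinearMap.snd ℂ _ _) W, ∀ y ∈ Submodule.map (LinearMap.snd ℂ _ _) W,
        ⁅x, y⁆ ∈ Submodule.map (LinearMap.snd ℂ _ _) W) ∧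
    (loopCarrier σ ε ⊓ (loopForm g).orthogonal (Submodule.map (LinearMap.fst ℂ _ _) W)
        ≤ Submodule.map (LinearMap.fst ℂ _ _) W) ∧
    (loopDagCarrier σ ε ⊓ (loopForm g).orthogonal (Submodule.map (LinearMap.snd ℂ _ _) W)
        ≤ Submodule.map (LinearMap.snd ℂ _ _) W) ∧
    ((loopCarrier σ ε ⊓ (loopForm g).orthogonal (Submodule.map (LinearMap.fst ℂ _ _) W)).prod
        ⊥ ≤ W) ∧
    (Submodule.prod ⊥
        (loopDagCarrier σ ε ⊓ (loopForm g).orthogonal (Submodule.map (LinearMap.snd ℂ _ _) W))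
        ≤ W) ∧
    (∃ n : ℕ,
      loopGe σ ε m (n : ℤ) ≤ Submodule.map (LinearMap.fst ℂ _ _) W ∧
      Submodule.map (LinearMap.fst ℂ _ _) W ≤ loopGe σ ε m (-(n : ℤ)) ∧
      loopGeDag σ ε m (n : ℤ) ≤ Submodule.map (LinearMap.snd ℂ _ _) W ∧
      Submodule.map (LinearMap.snd ℂ _ _) W ≤ loopGeDag σ ε m (-(n : ℤ))) := by
  have hstd := stdW_le_prod_gradedGe hdec
  have hcoiso₁ := prod_bot_le_of_coisotropic hWcoiso
  have hcoiso₂ := bot_prod_le_of_coisotropic hWcoiso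
  have horth₁ : loopCarrier σ ε ⊓ (loopForm g).orthogonal (W.map (LinearMap.fst ℂ _ _)) ≤
      W.map (LinearMap.fst ℂ _ _) := fun x hx => ⟨(x, 0), hcoiso₁ ⟨hx, rfl⟩, rfl⟩
  have horth₂ : loopDagCarrier σ ε ⊓ (loopForm g).orthogonal (W.map (LinearMap.snd ℂ _ _)) ≤
      W.map (LinearMap.snd ℂ _ _) := fun x hx => ⟨(0, x), hcoiso₂ ⟨rfl, hx⟩, rfl⟩
  obtain ⟨S, hS, hSsup, hWS⟩ := hcomm.exists_fg_le_sup
  have hSsub : S ≤ (loopCarrier σ ε).prod (loopDagCarrier σ ε) := hSsup.trans <| sup_le hWsub <|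
    hstd.trans (Submodule.prod_mono (gradedGe_le_gradedSup _ 0) (gradedGe_le_gradedSup _ 0))
  obtain ⟨hstd₁, hstd₂⟩ := (Submodule.le_prod_iff ℂ _ _).mp hstd
  obtain ⟨hS₁, hS₂⟩ := (Submodule.le_prod_iff ℂ _ _).mp hSsub
  obtain ⟨N₁, hN₁⟩ := exists_map_le_gradedGe _ _ hWS hstd₁ hS hS₁
  obtain ⟨N₂, hN₂⟩ := exists_map_le_gradedGe _ _ hWS hstd₂ hS hS₂
  obtain ⟨hlow₁, hup₁⟩ := gradedGe_le_and_le_gradedGe _ hN₁ horth₁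
    (Nat.lt_succ_of_le (le_max_left N₁ N₂)) hm
  obtain ⟨hlow₂, hup₂⟩ := gradedGe_le_and_le_gradedGe _ hN₂ horth₂
    (Nat.lt_succ_of_le (le_max_right N₁ N₂)) hm
  refine ⟨?_, ?_, horth₁, horth₂, hcoiso₁, hcoiso₂, max N₁ N₂ + 1, hlow₁, hup₁, hlow₂, hup₂⟩ <;>
  · rintro _ ⟨x, hx, rfl⟩ _ ⟨y, hy, rfl⟩
    exact ⟨_, hWlie x hx y hy, rfl⟩

/-- Let `M = L × L^‡ = D ⊕ W` be a Manin triple with `W` commensurable with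
the standard Lagrangian complement `W°`, and let `W_±` be the images of `W` under the two
projections.  Then `W_±` are Lie subalgebras with `W_±^⊥ ⊆ W_±`, one has
`W_+^⊥ × {0} ⊆ W` and `{0} × W_−^⊥ ⊆ W`, and there is `n ∈ ℕ` with
`(L_±)_{≥n} ⊆ W_± ⊆ (L_±)_{≥−n}`; i.e. `W_±` are bounded coisotropic Lie subalgebras. -/
theorem maninTriple_projections_bounded_coisotropic
    {g : Type*} [LieRing g] [LieAlgebra ℂ g]
    [Module.Finite ℂ g] [LieAlgebra.IsSimple ℂ g]
    (m : ℕ) (hm : 0 < m)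
    (σ : g ≃ₗ⁅ℂ⁆ g) (hσ : ∀ x : g, (⇑σ)^[m] x = x)
    (ε : ℂ) (hε : IsPrimitiveRoot ε m)
    -- a triangular decomposition g₀ = g₀⁺ ⊕ h ⊕ g₀⁻
    (gp hC gm : Submodule ℂ g)
    (hdec : gp ⊔ hC ⊔ gm = eigSp σ ε 0)
    (hd1 : Disjoint gp (hC ⊔ gm)) (hd2 : Disjoint hC gm)
    -- the Manin triple M = D ∔ W
    (W : Submodule ℂ (LoopAlg g × LoopAlg g))
    (hWsub : W ≤ (loopCarrier σ ε).prod (loopDagCarrier σ ε))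
    (hWlie : ∀ x ∈ W, ∀ y ∈ W, (⁅Prod.fst x, Prod.fst y⁆, ⁅Prod.snd x, Prod.snd y⁆) ∈ W)
    (hWiso : ∀ x ∈ W, ∀ y ∈ W, prodForm g x y = 0)
    (hWcoiso : ∀ x ∈ (loopCarrier σ ε).prod (loopDagCarrier σ ε),
      (∀ y ∈ W, prodForm g x y = 0) → x ∈ W)
    (hdisj : Disjoint (loopDiag σ ε) W)
    (hsup : loopDiag σ ε ⊔ W = (loopCarrier σ ε).prod (loopDagCarrier σ ε))
    (hcomm : Commens W (stdW σ ε gp hC gm)) :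
    (∀ x ∈ Submodule.map (LinearMap.fst ℂ _ _) W, ∀ y ∈ Submodule.map (LinearMap.fst ℂ _ _) W,
        ⁅x, y⁆ ∈ Submodule.map (LinearMap.fst ℂ _ _) W) ∧
    (∀ x ∈ Submodule.map (LinearMap.snd ℂ _ _) W, ∀ y ∈ Submodule.map (LinearMap.snd ℂ _ _) W,
        ⁅x, y⁆ ∈ Submodule.map (LinearMap.snd ℂ _ _) W) ∧
    (loopCarrier σ ε ⊓ (loopForm g).orthogonal (Submodule.map (LinearMap.fst ℂ _ _) W)
        ≤ Submodule.map (LinearMap.fst ℂ _ _) W) ∧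
    (loopDagCarrier σ ε ⊓ (loopForm g).orthogonal (Submodule.map (LinearMap.snd ℂ _ _) W)
        ≤ Submodule.map (LinearMap.snd ℂ _ _) W) ∧
    ((loopCarrier σ ε ⊓ (loopForm g).orthogonal (Submodule.map (LinearMap.fst ℂ _ _) W)).prod
        ⊥ ≤ W) ∧
    (Submodule.prod ⊥
        (loopDagCarrier σ ε ⊓ (loopForm g).orthogonal (Submodule.map (LinearMap.snd ℂ _ _) W))
        ≤ W) ∧
    (∃ n : ℕ,
      loopGe σ ε m (n : ℤ) ≤ Submodule.map (LinearMap.fst ℂ _ _) W ∧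
      Submodule.map (LinearMap.fst ℂ _ _) W ≤ loopGe σ ε m (-(n : ℤ)) ∧
      loopGeDag σ ε m (n : ℤ) ≤ Submodule.map (LinearMap.snd ℂ _ _) W ∧
      Submodule.map (LinearMap.snd ℂ _ _) W ≤ loopGeDag σ ε m (-(n : ℤ))) :=
  maninTriple_projections_bounded_coisotropic_general m hm σ ε gp hC gm hdec W hWsub hWlie hWcoiso
    hcomm
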